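/- Let 0 < α ≤ 2 and 2 ≤ β < 4, and set s = 2 − (β−α)/2. Let μ be a positive Borel measure on [0,1) whose moments satisfy n^s · μ_n → 0 as n → ∞ (and μ_n = O(n^{-(α/2+ε)}) for some ε > 0). Then lim_{m→∞} sup { Σ_{n=m+1}^∞ (n+1)^{3−β} |Σ_{k=0}^∞ μ_{n+k} a_k|² : (a_k) complex sequence with Σ_{k=0}^∞ (k+1)^{1−α}|a_k|² ≤ 1 } = 0. In particular, DH_μ is the operator-norm limit of the finite-rank truncations DH_{μ,m}(f)(z) = Σ_{n=0}^m (Σ_{k=0}^∞ μ_{n+k} a_k)(n+1) z^n, and hence DH_μ is a compact operator from D_α into D_β. -/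

import Mathlib

/-! The tail is a Hankel matrix `(μ_{N+k})_{N > m, k ≥ 0}` acting from the weighted `ℓ²` space
of `D_α` into that of `D_β`. Once `μ_j ≤ δ j^(-s)` for `j > m`, the Schur test with the weights
`(k+1)^(α/2-1)` on columns and `N^(1-β/2)` on rows bounds it by `C δ²`: both Schur conditions
reduce to `∑_j (j+1)^q (j+M)^(-s) = O(M^(q+1-s))` for `-1 < q < s - 1`. Since `n^s μ_n → 0`,
taking `m` large makes `δ` as small as we like. -/

open MeasureTheory Filter

/-- The `n`-th moment of a positive Borel measure on `[0,1)`. -/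
noncomputable def moment (μ : Measure ℝ) (n : ℕ) : ℝ :=
  ∫ t in Set.Ico (0 : ℝ) 1, t ^ n ∂μ

open Finset Real Topology Set

theorem rpow_le_two_rpow_abs_mul_rpow {x y : ℝ} (t : ℝ) (hx : 0 < x) (hxy : x ≤ 2 * y)
    (hyx : y ≤ 2 * x) : x ^ t ≤ 2 ^ |t| * y ^ t := by
  have hy : 0 < y := by linarith
  rcases le_or_gt 0 t with ht | ht
  · rw [abs_of_nonneg ht, ← mul_rpow zero_le_two hy.le]
    exact rpow_le_rpow hx.le hxy ht
  · calc x ^ t ≤ (y / 2) ^ t := rpow_le_rpow_of_nonpos (by positivity) (by linarith) ht.le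
      _ = 2 ^ |t| * y ^ t := by
        rw [abs_of_neg ht, div_rpow hy.le zero_le_two, rpow_neg zero_le_two]
        ring

theorem mul_add_one_rpow_sub_one_le {p x : ℝ} (hx : 0 ≤ x) (hp₀ : 0 ≤ p) (hp₁ : p ≤ 1) :
    p * (x + 1) ^ (p - 1) ≤ (x + 1) ^ p - x ^ p := by
  have hx1 : 0 < x + 1 := by linarith
  have hs : -1 ≤ -(x + 1)⁻¹ := by simpa using inv_le_one_of_one_le₀ (by linarith)
  have hxp : x ^ p = (x + 1) ^ p * (1 + -(x + 1)⁻¹) ^ p := by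
    rw [← mul_rpow hx1.le (by linarith)]
    congr 1
    field_simp
    ring
  calc p * (x + 1) ^ (p - 1) = (x + 1) ^ p * (1 - (1 + p * -(x + 1)⁻¹)) := by
        rw [rpow_sub_one hx1.ne']; ring
    _ ≤ (x + 1) ^ p * (1 - (1 + -(x + 1)⁻¹) ^ p) := by
        gcongr
        exact rpow_one_add_le_one_add_mul_self hs hp₀ hp₁
    _ = (x + 1) ^ p - x ^ p := by rw [hxp]; ring

theorem exists_sum_range_add_one_rpow_le {q : ℝ} (hq : -1 < q) :
    ∃ K > 0, ∀ M : ℕ, ∑ j ∈ range M, ((j : ℝ) + 1) ^ q ≤ K * (M : ℝ) ^ (q + 1) := by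
  rcases le_or_gt 0 q with hq₀ | hq₀
  · refine ⟨1, one_pos, fun M => ?_⟩
    calc ∑ j ∈ range M, ((j : ℝ) + 1) ^ q ≤ ∑ _j ∈ range M, (M : ℝ) ^ q := by
          gcongr with j hj
          exact_mod_cast mem_range.mp hj
      _ = 1 * (M : ℝ) ^ (q + 1) := by
          rw [sum_const, card_range, nsmul_eq_mul, rpow_add_one' M.cast_nonneg (by linarith)]
          ring
  · have hq1 : 0 < q + 1 := by linarith
    refine ⟨1 / (q + 1), by positivity, fun M => ?_⟩
    have htele : ∑ j ∈ range M, (q + 1) * ((j : ℝ) + 1) ^ q ≤ (M : ℝ) ^ (q + 1) := by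
      calc ∑ j ∈ range M, (q + 1) * ((j : ℝ) + 1) ^ q
          ≤ ∑ j ∈ range M, ((((j + 1 : ℕ) : ℝ)) ^ (q + 1) - ((j : ℕ) : ℝ) ^ (q + 1)) := by
            gcongr with j
            push_cast
            simpa using mul_add_one_rpow_sub_one_le (j.cast_nonneg (α := ℝ)) hq1.le (by linarith)
        _ = (M : ℝ) ^ (q + 1) := by
            rw [sum_range_sub (fun j : ℕ => ((j : ℝ)) ^ (q + 1))]
            simp [zero_rpow hq1.ne']
    rw [← mul_sum] at htele
    rw [div_mul_eq_mul_div, one_mul, le_div_iff₀ hq1]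
    linarith

theorem exists_tsum_add_rpow_neg_le {r : ℝ} (hr : 1 < r) :
    ∃ K > 0, ∀ M : ℕ, 1 ≤ M → Summable (fun j : ℕ => ((j : ℝ) + M) ^ (-r)) ∧
      ∑' j : ℕ, ((j : ℝ) + M) ^ (-r) ≤ K * (M : ℝ) ^ (1 - r) := by
  have hr1 : 0 < r - 1 := by linarith
  refine ⟨1 + 1 / (r - 1), by positivity, fun M hM => ?_⟩
  have hM : (1 : ℝ) ≤ M := by exact_mod_cast hM
  have hM0 : (0 : ℝ) < M := by linarith
  have hanti : AntitoneOn (fun x : ℝ => x ^ (-r)) (Ici (M : ℝ)) := fun x hx y _ hxy =>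
    rpow_le_rpow_of_nonpos (hM0.trans_le hx) hxy (by linarith)
  have hsum : Summable (fun j : ℕ => ((j : ℝ) + M) ^ (-r)) := by
    have := (summable_nat_add_iff M).mpr (Real.summable_nat_rpow.mpr (by linarith : -r < -1))
    simpa using this
  refine ⟨hsum, ?_⟩
  have htail : ∑' j : ℕ, ((j : ℝ) + 1 + M) ^ (-r) ≤ M ^ (1 - r) / (r - 1) := by
    have h := hanti.tsum_comp_add_le_integral M
      (integrableOn_Ioi_rpow_of_lt (by linarith) hM0)
      (fun t ht => rpow_nonneg (hM0.trans ht).le _)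
    rw [integral_Ioi_rpow_of_lt (by linarith) hM0] at h
    convert h using 1
    · push_cast; congr 1; ext; ring_nf
    · rw [show -r + 1 = 1 - r by ring, neg_div, ← div_neg, neg_sub]
  have hhead : (M : ℝ) ^ (-r) ≤ M ^ (1 - r) := rpow_le_rpow_of_exponent_le hM (by linarith)
  rw [hsum.tsum_eq_zero_add]
  push_cast at htail ⊢
  rw [zero_add]
  calc _ ≤ (M : ℝ) ^ (1 - r) + M ^ (1 - r) / (r - 1) := add_le_add hhead htail
    _ = _ := by ring

theorem exists_tsum_add_one_rpow_mul_add_rpow_neg_le {q r : ℝ} (hq : -1 < q) (hqr : q + 1 < r) :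
    ∃ K > 0, ∀ M : ℕ, 1 ≤ M →
      Summable (fun j : ℕ => ((j : ℝ) + 1) ^ q * ((j : ℝ) + M) ^ (-r)) ∧
        ∑' j : ℕ, ((j : ℝ) + 1) ^ q * ((j : ℝ) + M) ^ (-r) ≤ K * (M : ℝ) ^ (q + 1 - r) := by
  obtain ⟨KA, hKA, hA⟩ := exists_sum_range_add_one_rpow_le hq
  obtain ⟨KB, hKB, hB⟩ := exists_tsum_add_rpow_neg_le (r := r - q) (by linarith)
  refine ⟨KA + 2 ^ |q| * KB, by positivity, fun M hM => ?_⟩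
  have hM1 : (1 : ℝ) ≤ M := by exact_mod_cast hM
  have hM0 : (0 : ℝ) < M := by linarith
  set f : ℕ → ℝ := fun j => ((j : ℝ) + 1) ^ q * ((j : ℝ) + M) ^ (-r)
  have hf : ∀ j, 0 ≤ f j := fun j => by positivity
  -- below `M` the second factor is at most `M ^ (-r)`; above it, `j + 1` and `j + M` are comparable
  have hhead : ∑ j ∈ range M, f j ≤ KA * (M : ℝ) ^ (q + 1 - r) := by
    calc ∑ j ∈ range M, f j ≤ ∑ j ∈ range M, ((j : ℝ) + 1) ^ q * (M : ℝ) ^ (-r) := by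
          refine sum_le_sum fun j _ => mul_le_mul_of_nonneg_left ?_ (by positivity)
          exact rpow_le_rpow_of_nonpos hM0 (by linarith [j.cast_nonneg (α := ℝ)]) (by linarith)
      _ ≤ KA * (M : ℝ) ^ (q + 1) * (M : ℝ) ^ (-r) := by
          rw [← sum_mul]; gcongr; exact hA M
      _ = KA * (M : ℝ) ^ (q + 1 - r) := by
          rw [mul_assoc, ← rpow_add hM0, sub_eq_add_neg]
  have htail : ∀ n, ∑ i ∈ range n, f (M + i) ≤ 2 ^ |q| * KB * (M : ℝ) ^ (q + 1 - r) := by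
    intro n
    calc ∑ i ∈ range n, f (M + i) ≤ ∑ i ∈ range n, 2 ^ |q| * ((i : ℝ) + M) ^ (-(r - q)) := by
          gcongr with i
          have hiM : (0 : ℝ) < i + M := by positivity
          calc f (M + i) ≤ (2 ^ |q| * ((i : ℝ) + M) ^ q) * ((i : ℝ) + M) ^ (-r) := by
                simp only [f]
                push_cast
                refine mul_le_mul (rpow_le_two_rpow_abs_mul_rpow q (by positivity) (by linarith)
                  (by linarith)) (rpow_le_rpow_of_nonpos hiM (by linarith) (by linarith))
                  (by positivity) (by positivity)
            _ = 2 ^ |q| * ((i : ℝ) + M) ^ (-(r - q)) := by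
                rw [mul_assoc, ← rpow_add hiM]; ring_nf
      _ ≤ 2 ^ |q| * KB * (M : ℝ) ^ (q + 1 - r) := by
          rw [← mul_sum, mul_assoc]
          gcongr
          obtain ⟨hsum, hle⟩ := hB M hM
          refine (hsum.sum_le_tsum _ fun i _ => by positivity).trans ?_
          rwa [show 1 - (r - q) = q + 1 - r by ring] at hle
  have hpartial : ∀ n, ∑ j ∈ range n, f j ≤ (KA + 2 ^ |q| * KB) * (M : ℝ) ^ (q + 1 - r) := by
    intro n
    calc ∑ j ∈ range n, f j ≤ ∑ j ∈ range (M + n), f j :=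
          sum_le_sum_of_subset_of_nonneg (range_subset_range.mpr (by omega)) fun j _ _ => hf j
      _ ≤ _ := by rw [sum_range_add]; linarith [hhead, htail n]
  exact ⟨summable_of_sum_range_le hf hpartial, Real.tsum_le_of_sum_range_le hf hpartial⟩

section WeightedSeries

variable {E : Type*} [NormedAddCommGroup E] [NormedSpace ℝ E]

theorem norm_tsum_smul_sq_le {ι : Type*} {w p : ι → ℝ} {a : ι → E} (hw : ∀ k, 0 ≤ w k)
    (hp : ∀ k, 0 < p k) (h₁ : Summable fun k => w k * p k)
    (h₂ : Summable fun k => w k * ‖a k‖ ^ 2 / p k) :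
    ‖∑' k, w k • a k‖ ^ 2 ≤ (∑' k, w k * p k) * ∑' k, w k * ‖a k‖ ^ 2 / p k := by
  have hu : ∀ k, 0 ≤ w k * p k := fun k => mul_nonneg (hw k) (hp k).le
  have hv : ∀ k, 0 ≤ w k * ‖a k‖ ^ 2 / p k := fun k => by have := hp k; have := hw k; positivity
  have hprod : ∀ k, (w k * ‖a k‖) ^ 2 = (w k * p k) * (w k * ‖a k‖ ^ 2 / p k) := fun k => by
    field_simp [(hp k).ne']
  have hamgm : ∀ k, w k * ‖a k‖ ≤ (w k * p k + w k * ‖a k‖ ^ 2 / p k) / 2 := fun k => by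
    have hgap : (w k * p k + w k * ‖a k‖ ^ 2 / p k) / 2 - w k * ‖a k‖
        = w k * (p k - ‖a k‖) ^ 2 / (2 * p k) := by
      field_simp [(hp k).ne']
      ring
    have := hp k
    have := hw k
    have : 0 ≤ w k * (p k - ‖a k‖) ^ 2 / (2 * p k) := by positivity
    linarith
  have hsum : Summable fun k => w k * ‖a k‖ :=
    ((h₁.add h₂).div_const 2).of_nonneg_of_le (fun k => mul_nonneg (hw k) (norm_nonneg _)) hamgm
  have hnorm : ∀ k, ‖w k • a k‖ = w k * ‖a k‖ := fun k => by
    rw [norm_smul, norm_of_nonneg (hw k)]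
  have hcs : (∑' k, w k * ‖a k‖) ^ 2 ≤ (∑' k, w k * p k) * ∑' k, w k * ‖a k‖ ^ 2 / p k := by
    refine le_of_tendsto' (hsum.hasSum.pow 2) fun s => ?_
    calc (∑ k ∈ s, w k * ‖a k‖) ^ 2
        ≤ (∑ k ∈ s, w k * p k) * ∑ k ∈ s, w k * ‖a k‖ ^ 2 / p k :=
          sum_sq_le_sum_mul_sum_of_sq_le_mul s (fun k _ => hu k) (fun k _ => hv k)
            fun k _ => (hprod k).le
      _ ≤ _ := mul_le_mul (h₁.sum_le_tsum s fun k _ => hu k) (h₂.sum_le_tsum s fun k _ => hv k)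
          (sum_nonneg fun k _ => hv k) (tsum_nonneg hu)
  calc ‖∑' k, w k • a k‖ ^ 2 ≤ (∑' k, w k * ‖a k‖) ^ 2 := by
        gcongr
        have hsum' : Summable fun k => ‖w k • a k‖ := by simpa only [hnorm] using hsum
        simpa only [hnorm] using norm_tsum_le_tsum_norm hsum'
    _ ≤ _ := hcs

theorem tsum_mul_norm_tsum_smul_sq_le_of_schur {T : ℕ → ℕ → ℝ} {u v p g : ℕ → ℝ} {A B : ℝ}
    (hT : ∀ n k, 0 ≤ T n k) (hu : ∀ n, 0 ≤ u n) (hp : ∀ k, 0 < p k) (hg : ∀ n, 0 < g n)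
    (hrow_summable : ∀ n, Summable fun k => T n k * p k)
    (hrow : ∀ n, u n * ∑' k, T n k * p k ≤ A * g n)
    (hcol : ∀ k N, ∑ n ∈ range N, T n k * g n ≤ B * (p k * v k))
    {a : ℕ → E} (ha : Summable fun k => v k * ‖a k‖ ^ 2) :
    ∑' n, u n * ‖∑' k, T n k • a k‖ ^ 2 ≤ A * B * ∑' k, v k * ‖a k‖ ^ 2 := by
  have hA : 0 ≤ A := by
    refine nonneg_of_mul_nonneg_left ?_ (hg 0)
    exact (mul_nonneg (hu 0) (tsum_nonneg fun k => mul_nonneg (hT 0 k) (hp k).le)).trans (hrow 0)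
  set S : ℕ → ℕ → ℝ := fun n k => T n k * ‖a k‖ ^ 2 / p k
  have hS : ∀ n k, 0 ≤ S n k := fun n k => by have := hT n k; have := hp k; positivity
  have hS_le : ∀ n k, S n k ≤ B / g n * (v k * ‖a k‖ ^ 2) := fun n k => by
    have hTg : T n k * g n ≤ B * (p k * v k) :=
      (single_le_sum (fun i _ => mul_nonneg (hT i k) (hg i).le) (self_mem_range_succ n)).trans
        (hcol k (n + 1))
    have := hg n
    have := hp k
    calc S n k = T n k * g n * (‖a k‖ ^ 2 / (p k * g n)) := by simp only [S]; field_simp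
      _ ≤ B * (p k * v k) * (‖a k‖ ^ 2 / (p k * g n)) := by gcongr
      _ = B / g n * (v k * ‖a k‖ ^ 2) := by field_simp
  have hS_summable : ∀ n, Summable (S n) := fun n =>
    (ha.mul_left (B / g n)).of_nonneg_of_le (hS n) (hS_le n)
  have hrow_cs : ∀ n, u n * ‖∑' k, T n k • a k‖ ^ 2 ≤ A * (g n * ∑' k, S n k) := fun n =>
    calc u n * ‖∑' k, T n k • a k‖ ^ 2 ≤ u n * ((∑' k, T n k * p k) * ∑' k, S n k) :=
          mul_le_mul_of_nonneg_left (norm_tsum_smul_sq_le (hT n) hp (hrow_summable n)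
            (hS_summable n)) (hu n)
      _ ≤ A * g n * ∑' k, S n k := by
          rw [← mul_assoc]; exact mul_le_mul_of_nonneg_right (hrow n) (tsum_nonneg (hS n))
      _ = A * (g n * ∑' k, S n k) := mul_assoc _ _ _
  have hcol_S : ∀ N k, ∑ n ∈ range N, g n * S n k ≤ B * (v k * ‖a k‖ ^ 2) := fun N k => by
    have := hp k
    calc ∑ n ∈ range N, g n * S n k = (∑ n ∈ range N, T n k * g n) * (‖a k‖ ^ 2 / p k) := by
          rw [sum_mul]; refine sum_congr rfl fun n _ => ?_; simp only [S]; ring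
      _ ≤ B * (p k * v k) * (‖a k‖ ^ 2 / p k) := by gcongr; exact hcol k N
      _ = B * (v k * ‖a k‖ ^ 2) := by field_simp
  refine Real.tsum_le_of_sum_range_le (fun n => by have := hu n; positivity) fun N => ?_
  calc ∑ n ∈ range N, u n * ‖∑' k, T n k • a k‖ ^ 2
      ≤ A * ∑ n ∈ range N, g n * ∑' k, S n k := by
        rw [mul_sum]; exact sum_le_sum fun n _ => hrow_cs n
    _ = A * ∑' k, ∑ n ∈ range N, g n * S n k := by
        rw [Summable.tsum_finsetSum fun n _ => (hS_summable n).mul_left (g n)]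
        simp_rw [tsum_mul_left]
    _ ≤ A * ∑' k, B * (v k * ‖a k‖ ^ 2) :=
        mul_le_mul_of_nonneg_left (Summable.tsum_le_tsum (hcol_S N)
          (summable_sum fun n _ => (hS_summable n).mul_left (g n)) (ha.mul_left B)) hA
    _ = A * B * ∑' k, v k * ‖a k‖ ^ 2 := by rw [tsum_mul_left, mul_assoc]

theorem summable_and_tsum_hankel_row_le {w : ℕ → ℝ} {δ c s K : ℝ} {m : ℕ} (hw : ∀ j, 0 ≤ w j)
    (hδ : 0 ≤ δ) (hwδ : ∀ j, m < j → w j ≤ δ * (j : ℝ) ^ (-s))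
    (hK : ∀ M : ℕ, 1 ≤ M → Summable (fun j : ℕ => ((j : ℝ) + 1) ^ c * ((j : ℝ) + M) ^ (-s)) ∧
      ∑' j : ℕ, ((j : ℝ) + 1) ^ c * ((j : ℝ) + M) ^ (-s) ≤ K * (M : ℝ) ^ (c + 1 - s))
    (N : ℕ) (hN : m < N) :
    Summable (fun k : ℕ => w (N + k) * ((k : ℝ) + 1) ^ c) ∧
      ∑' k : ℕ, w (N + k) * ((k : ℝ) + 1) ^ c ≤ δ * K * (N : ℝ) ^ (c + 1 - s) := by
  obtain ⟨hsum, hle⟩ := hK N (by omega)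
  have hpt : ∀ k : ℕ, w (N + k) * ((k : ℝ) + 1) ^ c
      ≤ δ * (((k : ℝ) + 1) ^ c * ((k : ℝ) + N) ^ (-s)) := fun k => by
    rw [mul_left_comm, mul_comm]
    refine mul_le_mul_of_nonneg_left ?_ (by positivity)
    simpa [add_comm] using hwδ (N + k) (by omega)
  have hsum' := (hsum.mul_left δ).of_nonneg_of_le (fun k => mul_nonneg (hw _) (by positivity)) hpt
  refine ⟨hsum', ?_⟩
  calc _ ≤ ∑' k : ℕ, δ * (((k : ℝ) + 1) ^ c * ((k : ℝ) + N) ^ (-s)) :=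
        hsum'.tsum_le_tsum hpt (hsum.mul_left δ)
    _ ≤ δ * K * (N : ℝ) ^ (c + 1 - s) := by
        rw [tsum_mul_left, mul_assoc]; exact mul_le_mul_of_nonneg_left hle hδ

theorem sum_range_hankel_column_le {w : ℕ → ℝ} {δ q s K : ℝ} {m : ℕ} (hδ : 0 ≤ δ)
    (hwδ : ∀ j, m < j → w j ≤ δ * (j : ℝ) ^ (-s))
    (hK : ∀ M : ℕ, 1 ≤ M → Summable (fun j : ℕ => ((j : ℝ) + 1) ^ q * ((j : ℝ) + M) ^ (-s)) ∧
      ∑' j : ℕ, ((j : ℝ) + 1) ^ q * ((j : ℝ) + M) ^ (-s) ≤ K * (M : ℝ) ^ (q + 1 - s))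
    (k N : ℕ) :
    ∑ n ∈ range N, w (n + m + 1 + k) * ((n + m + 1 : ℕ) : ℝ) ^ q
      ≤ δ * K * ((k : ℝ) + 1) ^ (q + 1 - s) := by
  obtain ⟨hsum, hle⟩ := hK (k + 1) (by omega)
  set F : ℕ → ℝ := fun j => ((j : ℝ) + 1) ^ q * ((j : ℝ) + ((k + 1 : ℕ) : ℝ)) ^ (-s)
  have hpt : ∀ n, w (n + m + 1 + k) * ((n + m + 1 : ℕ) : ℝ) ^ q ≤ δ * F (n + m) := fun n =>
    calc w (n + m + 1 + k) * ((n + m + 1 : ℕ) : ℝ) ^ q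
        ≤ δ * ((n + m + 1 + k : ℕ) : ℝ) ^ (-s) * ((n + m + 1 : ℕ) : ℝ) ^ q :=
          mul_le_mul_of_nonneg_right (hwδ _ (by omega)) (by positivity)
      _ = δ * F (n + m) := by simp only [F]; push_cast; ring_nf
  calc ∑ n ∈ range N, w (n + m + 1 + k) * ((n + m + 1 : ℕ) : ℝ) ^ q
      ≤ δ * ∑ n ∈ range N, F (n + m) := by rw [mul_sum]; exact sum_le_sum fun n _ => hpt n
    _ ≤ δ * ∑' j, F j := by
        refine mul_le_mul_of_nonneg_left ?_ hδ
        simpa using hsum.sum_le_tsum ((range N).map (addRightEmbedding m)) fun j _ => by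
          positivity
    _ ≤ δ * K * ((k : ℝ) + 1) ^ (q + 1 - s) := by
        rw [mul_assoc]; push_cast at hle; exact mul_le_mul_of_nonneg_left hle hδ

theorem exists_tsum_hankel_tail_le {α β s : ℝ} (hα : 0 < α) (hβ : β < 4)
    (hs : s = 2 - (β - α) / 2) :
    ∃ C > 0, ∀ (w : ℕ → ℝ) (δ : ℝ) (m : ℕ), (∀ j, 0 ≤ w j) →
      (∀ j, m < j → w j ≤ δ * (j : ℝ) ^ (-s)) → ∀ a : ℕ → E,
      Summable (fun k : ℕ => ((k : ℝ) + 1) ^ (1 - α) * ‖a k‖ ^ 2) →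
      ∑' n : ℕ, ((n : ℝ) + m + 2) ^ (3 - β) * ‖∑' k : ℕ, w (n + m + 1 + k) • a k‖ ^ 2
        ≤ C * δ ^ 2 * ∑' k : ℕ, ((k : ℝ) + 1) ^ (1 - α) * ‖a k‖ ^ 2 := by
  obtain ⟨K₁, hK₁, hK₁_bound⟩ :=
    exists_tsum_add_one_rpow_mul_add_rpow_neg_le (q := α / 2 - 1) (r := s) (by linarith)
      (by rw [hs]; linarith)
  obtain ⟨K₂, hK₂, hK₂_bound⟩ :=
    exists_tsum_add_one_rpow_mul_add_rpow_neg_le (q := 1 - β / 2) (r := s) (by linarith)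
      (by rw [hs]; linarith)
  refine ⟨2 ^ |3 - β| * K₁ * K₂, by positivity, fun w δ m hw hwδ a ha => ?_⟩
  have hδ : 0 ≤ δ :=
    nonneg_of_mul_nonneg_left ((hw (m + 1)).trans (hwδ _ (by omega))) (by positivity)
  have hrow : ∀ n : ℕ, ((n : ℝ) + m + 2) ^ (3 - β) *
      ∑' k : ℕ, w (n + m + 1 + k) * ((k : ℝ) + 1) ^ (α / 2 - 1)
        ≤ 2 ^ |3 - β| * δ * K₁ * ((n + m + 1 : ℕ) : ℝ) ^ (1 - β / 2) := fun n => by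
    set N := n + m + 1
    have hN : (0 : ℝ) < N := by positivity
    have hu : ((n : ℝ) + m + 2) ^ (3 - β) ≤ 2 ^ |3 - β| * (N : ℝ) ^ (3 - β) :=
      rpow_le_two_rpow_abs_mul_rpow _ (by positivity) (by push_cast [N]; linarith)
        (by push_cast [N]; linarith)
    have hexp : 3 - β + (α / 2 - 1 + 1 - s) = 1 - β / 2 := by rw [hs]; ring
    calc _ ≤ (2 ^ |3 - β| * (N : ℝ) ^ (3 - β)) * (δ * K₁ * (N : ℝ) ^ (α / 2 - 1 + 1 - s)) :=
          mul_le_mul hu (summable_and_tsum_hankel_row_le hw hδ hwδ hK₁_bound N (by omega)).2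
            (tsum_nonneg fun k => mul_nonneg (hw _) (by positivity)) (by positivity)
      _ = 2 ^ |3 - β| * δ * K₁ * (N : ℝ) ^ (1 - β / 2) := by rw [← hexp, rpow_add hN]; ring
  have hcol : ∀ k N : ℕ, ∑ n ∈ range N, w (n + m + 1 + k) * ((n + m + 1 : ℕ) : ℝ) ^ (1 - β / 2)
      ≤ δ * K₂ * (((k : ℝ) + 1) ^ (α / 2 - 1) * ((k : ℝ) + 1) ^ (1 - α)) := fun k N => by
    have hexp : 1 - β / 2 + 1 - s = α / 2 - 1 + (1 - α) := by rw [hs]; ring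
    rw [← rpow_add (by positivity), ← hexp]
    exact sum_range_hankel_column_le hδ hwδ hK₂_bound k N
  calc _ ≤ 2 ^ |3 - β| * δ * K₁ * (δ * K₂) * ∑' k : ℕ, ((k : ℝ) + 1) ^ (1 - α) * ‖a k‖ ^ 2 :=
        tsum_mul_norm_tsum_smul_sq_le_of_schur (fun n k => hw _) (fun n => by positivity)
          (fun k => by positivity) (fun n => by positivity)
          (fun n => (summable_and_tsum_hankel_row_le hw hδ hwδ hK₁_bound _ (by omega)).1)
          hrow hcol ha
    _ = _ := by ring

end WeightedSeries

theorem eventually_le_mul_rpow_neg_of_tendsto {x : ℕ → ℝ} {s δ : ℝ}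
    (hx : Tendsto (fun n : ℕ => (n : ℝ) ^ s * x n) atTop (𝓝 0)) (hδ : 0 < δ) :
    ∀ᶠ n : ℕ in atTop, x n ≤ δ * (n : ℝ) ^ (-s) := by
  filter_upwards [hx.eventually (gt_mem_nhds hδ), eventually_ge_atTop 1] with n hn h1
  have hn0 : (0 : ℝ) < n := by exact_mod_cast h1
  calc x n = (n : ℝ) ^ (-s) * ((n : ℝ) ^ s * x n) := by
        rw [← mul_assoc, ← rpow_add hn0, neg_add_cancel, rpow_zero, one_mul]
    _ ≤ (n : ℝ) ^ (-s) * δ := by gcongr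
    _ = δ * (n : ℝ) ^ (-s) := mul_comm _ _

theorem moment_nonneg (μ : Measure ℝ) (n : ℕ) : 0 ≤ moment μ n :=
  setIntegral_nonneg measurableSet_Ico fun _ ht => pow_nonneg ht.1 n

theorem stmt_12_general (α β : ℝ) (hα : 0 < α) (hβ' : β < 4)
    (s : ℝ) (hs : s = 2 - (β - α) / 2)
    (μ : Measure ℝ)
    (hsmall : Tendsto (fun n : ℕ => (n : ℝ) ^ s * moment μ n) atTop (nhds 0)) :
    ∀ ε > (0 : ℝ), ∃ M : ℕ, ∀ m : ℕ, M ≤ m → ∀ a : ℕ → ℂ,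
      Summable (fun k : ℕ => ((k : ℝ) + 1) ^ (1 - α) * ‖a k‖ ^ 2) →
      (∑' k : ℕ, ((k : ℝ) + 1) ^ (1 - α) * ‖a k‖ ^ 2) ≤ 1 →
      ∑' n : ℕ, ((n : ℝ) + (m : ℝ) + 2) ^ (3 - β) *
          ‖∑' k : ℕ, (moment μ (n + m + 1 + k) : ℂ) * a k‖ ^ 2 ≤ ε := by
  intro ε hε
  obtain ⟨C, hC, hhankel⟩ := exists_tsum_hankel_tail_le (E := ℂ) hα hβ' hs
  set δ := √(ε / C)
  obtain ⟨M, hM⟩ := (eventually_le_mul_rpow_neg_of_tendsto hsmall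
    (show 0 < δ by positivity)).exists_forall_of_atTop
  refine ⟨M, fun m hm a ha ha₁ => ?_⟩
  simp_rw [← Complex.real_smul]
  calc _ ≤ C * δ ^ 2 * ∑' k : ℕ, ((k : ℝ) + 1) ^ (1 - α) * ‖a k‖ ^ 2 :=
        hhankel (moment μ) δ m (moment_nonneg μ) (fun j hj => hM j (by omega)) a ha
    _ ≤ C * δ ^ 2 * 1 := by gcongr
    _ = ε := by rw [sq_sqrt (by positivity)]; field_simp

/-- If `n^s μ_n → 0` with `s = 2-(β-α)/2` (and `μ_n = O(n^{-(α/2+ε)})`), then the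
supremum over the unit ball of `D_α` of the `D_β`-norms of the tails of `DH_μ(f)`
tends to `0`; hence `DH_μ` is a norm limit of finite-rank operators and is compact
from `D_α` into `D_β`. -/
theorem stmt_12 (α β : ℝ) (hα : 0 < α) (hα' : α ≤ 2) (hβ : 2 ≤ β) (hβ' : β < 4)
    (s : ℝ) (hs : s = 2 - (β - α) / 2)
    (μ : Measure ℝ) [IsFiniteMeasure μ]
    (hmom : ∃ ε > (0 : ℝ), ∃ C > (0 : ℝ), ∀ n : ℕ, 1 ≤ n →
      moment μ n ≤ C * (n : ℝ) ^ (-(α / 2 + ε)))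
    (hsmall : Tendsto (fun n : ℕ => (n : ℝ) ^ s * moment μ n) atTop (nhds 0)) :
    ∀ ε > (0 : ℝ), ∃ M : ℕ, ∀ m : ℕ, M ≤ m → ∀ a : ℕ → ℂ,
      Summable (fun k : ℕ => ((k : ℝ) + 1) ^ (1 - α) * ‖a k‖ ^ 2) →
      (∑' k : ℕ, ((k : ℝ) + 1) ^ (1 - α) * ‖a k‖ ^ 2) ≤ 1 →
      ∑' n : ℕ, ((n : ℝ) + (m : ℝ) + 2) ^ (3 - β) *
          ‖∑' k : ℕ, (moment μ (n + m + 1 + k) : ℂ) * a k‖ ^ 2 ≤ ε :=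
  stmt_12_general α β hα hβ' s hs μ hsmall
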